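/- arXiv:math/9811095 — 2 statements merged into one kernel-verified Lean document; each statement's English description precedes it below -/
import Mathlib

section
/- Let F(3,d,v) denote the number of filters of cardinality v of the poset (M_d^3, A_{3,d}), and f(3,d) the total number of filters of (M_d^3, A_{3,d}). Then F(3,d,v) = F(3,d−1,v) + F(3,d−1,v−(d+1)) for d ≥ 2 (the second summand being 0 when v < d+1), F(3,1,v) = 1 for 0 ≤ v ≤ 3 and 0 otherwise, and f(3,d) = 2^{d+1} for all d ≥ 1. -/
/-- The free abelian monoid `M` on variables `x₁, x₂, …`, identified with
finitely supported exponent vectors; index `i : ℕ` represents the variable `x_{i+1}`. -/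
abbrev Mon : Type := ℕ →₀ ℕ

/-- Total degree of a monomial. -/
def deg (m : Mon) : ℕ := m.sum fun _ v => v

/-- `m` is a monomial in the first `n` variables, i.e. `m ∈ Mⁿ`. -/
def InVars (n : ℕ) (m : Mon) : Prop := ∀ i ∈ m.support, i < n

/-- Elementary move: `m = (x_i / x_j) · m'` for some `i < j` with `x_j ∣ m'`. -/
def ElemMove (m m' : Mon) : Prop :=
  ∃ i j : ℕ, i < j ∧ m + Finsupp.single j 1 = m' + Finsupp.single i 1

/-- Stable move: `m = (x_i / x_s) · m'` where `s = maxsupp m'` and `i < s`. -/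
def StableMove (m m' : Mon) : Prop :=
  ∃ s i : ℕ, i < s ∧ m' s ≠ 0 ∧ (∀ t, s < t → m' t = 0) ∧
    m + Finsupp.single s 1 = m' + Finsupp.single i 1

/-- The divisibility relation `D`: `(m, m') ∈ D` iff `m'` divides `m`. -/
def Dvd' (m m' : Mon) : Prop := ∃ t : Mon, m = m' + t

/-- `M_d^3`: monomials in `x₁, x₂, x₃` of total degree `d`. -/
abbrev Md3 (d : ℕ) : Type := {m : Mon // InVars 3 m ∧ deg m = d}

/-- The number of filters of cardinality `v` of `(M_d^3, A_{3,d})`, where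
`A_{3,d}` is the reflexive–transitive closure of elementary moves (which
preserve both degree and the variable range). -/
noncomputable def Ffilt (d v : ℕ) : ℕ :=
  Nat.card {U : Set (Md3 d) //
    (∀ m ∈ U, ∀ m' : Md3 d, Relation.ReflTransGen ElemMove m'.1 m.1 → m' ∈ U) ∧
    U.ncard = v}

/-- The total number of filters of `(M_d^3, A_{3,d})`. -/
noncomputable def fTot (d : ℕ) : ℕ :=
  Nat.card {U : Set (Md3 d) //
    ∀ m ∈ U, ∀ m' : Md3 d, Relation.ReflTransGen ElemMove m'.1 m.1 → m' ∈ U}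

lemma apply_le_deg (m : Mon) (i : ℕ) : m i ≤ deg m := by
  rcases eq_or_ne (m i) 0 with h | h
  · simp [h]
  · exact Finset.single_le_sum (f := fun j => m j) (fun _ _ => Nat.zero_le _)
      (Finsupp.mem_support_iff.mpr h)

lemma invars_apply {m : Mon} (h : InVars 3 m) {i : ℕ} (hi : 3 ≤ i) : m i = 0 := by
  by_contra hne
  exact absurd (h i (Finsupp.mem_support_iff.mpr hne)) (by omega)

lemma deg_eq_sum {m : Mon} (h : InVars 3 m) : deg m = m 0 + m 1 + m 2 := by
  have hs : m.support ⊆ ({0, 1, 2} : Finset ℕ) := by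
    intro i hi
    have := h i hi
    simp only [Finset.mem_insert, Finset.mem_singleton]
    omega
  rw [deg, Finsupp.sum_of_support_subset m hs _ (fun i _ => rfl)]
  simp [Finset.sum_insert, Finset.sum_singleton]; ring

lemma deg_add (a b : Mon) : deg (a + b) = deg a + deg b := by
  simp [deg, Finsupp.sum_add_index (h := fun _ v => v) (fun _ _ => rfl) (fun _ _ _ _ => rfl)]

lemma deg_single (j n : ℕ) : deg (Finsupp.single j n) = n := by
  simp [deg, Finsupp.sum_single_index]

lemma elemMove_apply {a b : Mon} (h : ElemMove a b) :
    deg a = deg b ∧ b 0 ≤ a 0 ∧ b 0 + b 1 ≤ a 0 + a 1 := by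
  obtain ⟨i, j, hij, heq⟩ := h
  have hdeg : deg a + 1 = deg b + 1 := by
    simpa [deg_add, deg_single] using congrArg deg heq
  have h0 := congrFun (congrArg (DFunLike.coe) heq) 0
  have h1 := congrFun (congrArg (DFunLike.coe) heq) 1
  simp only [Finsupp.add_apply, Finsupp.single_apply] at h0 h1
  refine ⟨by omega, ?_, ?_⟩ <;>
  · split_ifs at h0 h1 <;> omega

lemma rtg_dom {a b : Mon} (h : Relation.ReflTransGen ElemMove a b) :
    deg a = deg b ∧ b 0 ≤ a 0 ∧ b 0 + b 1 ≤ a 0 + a 1 := by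
  induction h with
  | refl => exact ⟨rfl, le_refl _, le_refl _⟩
  | tail _ hstep ih =>
    obtain ⟨d1, d2, d3⟩ := elemMove_apply hstep
    exact ⟨ih.1.trans d1, d2.trans ih.2.1, d3.trans ih.2.2⟩

lemma mon_ext3 {a b : Mon} (ha : InVars 3 a) (hb : InVars 3 b) (hd : deg a = deg b)
    (h0 : a 0 = b 0) (h1 : a 1 = b 1) : a = b := by
  have h2 : a 2 = b 2 := by
    have := deg_eq_sum ha; have := deg_eq_sum hb; omega
  ext i
  match i with
  | 0 => exact h0
  | 1 => exact h1
  | 2 => exact h2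
  | (k+3) => rw [invars_apply ha (by omega), invars_apply hb (by omega)]

lemma move_down (a : Mon) (i j : ℕ) (hij : i < j) (hai : 1 ≤ a i) :
    ∃ c : Mon, ElemMove a c ∧ c i = a i - 1 ∧ c j = a j + 1 ∧
      ∀ k, k ≠ i → k ≠ j → c k = a k := by
  set c : Mon := (a + Finsupp.single j 1) - Finsupp.single i 1 with hc
  have hca : ∀ k, c k = (a k + (if j = k then 1 else 0)) - (if i = k then 1 else 0) := by
    intro k
    rw [hc, Finsupp.tsub_apply, Finsupp.add_apply, Finsupp.single_apply, Finsupp.single_apply]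
  refine ⟨c, ⟨i, j, hij, ?_⟩, ?_, ?_, ?_⟩
  · ext k
    rw [Finsupp.add_apply, Finsupp.add_apply, Finsupp.single_apply, Finsupp.single_apply, hca k]
    split_ifs <;> subst_vars <;> omega
  · have := hca i
    split_ifs at this <;> omega
  · have := hca j
    split_ifs at this <;> omega
  · intro k hk1 hk2
    have := hca k
    split_ifs at this <;> omega

lemma dom_rtg (n : ℕ) : ∀ a b : Mon, InVars 3 a → InVars 3 b → deg a = deg b →
    b 0 ≤ a 0 → b 0 + b 1 ≤ a 0 + a 1 →
    (a 0 + a 0 + a 1) - (b 0 + b 0 + b 1) ≤ n →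
    Relation.ReflTransGen ElemMove a b := by
  induction n with
  | zero =>
    intro a b ha hb hd h0 h1 hn
    have e0 : a 0 = b 0 := by omega
    have e1 : a 1 = b 1 := by omega
    rw [mon_ext3 ha hb hd e0 e1]
  | succ n ih =>
    intro a b ha hb hd h0 h1 hn
    by_cases hcase : a 0 = b 0 ∧ a 1 = b 1
    · rw [mon_ext3 ha hb hd hcase.1 hcase.2]
    · rcases lt_or_eq_of_le h0 with hlt | heq
      · obtain ⟨c, hmove, hci, hcj, hck⟩ := move_down a 0 1 (by omega) (by omega)
        have hcv : InVars 3 c := by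
          intro k hk
          have hne := Finsupp.mem_support_iff.mp hk
          by_contra hge
          rw [hck k (by omega) (by omega), invars_apply ha (by omega)] at hne
          exact hne rfl
        have hcd : deg c = deg b := by
          have := (elemMove_apply hmove).1
          omega
        refine Relation.ReflTransGen.head hmove (ih c b hcv hb hcd ?_ ?_ ?_) <;> omega
      · have h1lt : b 1 < a 1 := by
          rcases Nat.lt_or_ge (b 1) (a 1) with h | h
          · exact h
          · exact absurd ⟨heq.symm, by omega⟩ hcase
        obtain ⟨c, hmove, hci, hcj, hck⟩ := move_down a 1 2 (by omega) (by omega)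
        have hc0 : c 0 = a 0 := hck 0 (by omega) (by omega)
        have hcv : InVars 3 c := by
          intro k hk
          have hne := Finsupp.mem_support_iff.mp hk
          by_contra hge
          rw [hck k (by omega) (by omega), invars_apply ha (by omega)] at hne
          exact hne rfl
        have hcd : deg c = deg b := by
          have := (elemMove_apply hmove).1
          omega
        refine Relation.ReflTransGen.head hmove (ih c b hcv hb hcd ?_ ?_ ?_) <;> omega

/-- Characterization of the strongly stable order on `M_d^3` as dominance. -/
lemma rtg_iff {d : ℕ} (m m' : Md3 d) :
    Relation.ReflTransGen ElemMove m'.1 m.1 ↔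
      m.1 0 ≤ m'.1 0 ∧ m.1 0 + m.1 1 ≤ m'.1 0 + m'.1 1 := by
  constructor
  · intro h
    exact (rtg_dom h).2
  · intro ⟨h0, h1⟩
    exact dom_rtg _ m'.1 m.1 m'.2.1 m.2.1 (m'.2.2.trans m.2.2.symm) h0 h1 (le_refl _)

/-- Filter condition. -/
abbrev Fc (d : ℕ) (U : Set (Md3 d)) : Prop :=
  ∀ m ∈ U, ∀ m' : Md3 d, Relation.ReflTransGen ElemMove m'.1 m.1 → m' ∈ U

lemma mem_of_dom {d : ℕ} {U : Set (Md3 d)} (hU : Fc d U) {m m' : Md3 d} (hm : m ∈ U)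
    (h0 : m.1 0 ≤ m'.1 0) (h1 : m.1 0 + m.1 1 ≤ m'.1 0 + m'.1 1) : m' ∈ U :=
  hU m hm m' ((rtg_iff m m').mpr ⟨h0, h1⟩)

lemma md3_ext {d : ℕ} {m m' : Md3 d} (h0 : m.1 0 = m'.1 0) (h1 : m.1 1 = m'.1 1) : m = m' :=
  Subtype.ext (mon_ext3 m.2.1 m'.2.1 (m.2.2.trans m'.2.2.symm) h0 h1)

lemma md3_bound {d : ℕ} (m : Md3 d) (i : ℕ) : m.1 i ≤ d := by
  exact (apply_le_deg m.1 i).trans (le_of_eq m.2.2)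

lemma md3_sum {d : ℕ} (m : Md3 d) : m.1 0 + m.1 1 + m.1 2 = d := by
  have h := deg_eq_sum m.2.1
  rw [m.2.2] at h
  omega

instance md3_finite (d : ℕ) : Finite (Md3 d) := by
  apply Finite.of_injective (fun m : Md3 d => ((⟨m.1 0, by have := md3_bound m 0; omega⟩ : Fin (d+1)),
    (⟨m.1 1, by have := md3_bound m 1; omega⟩ : Fin (d+1))))
  intro a b hab
  simp only [Prod.mk.injEq, Fin.mk.injEq] at hab
  exact md3_ext hab.1 hab.2

/-- Adding one to the exponent of variable `t`. -/
noncomputable def addv (e t : ℕ) (ht : t < 3) (n : Md3 e) : Md3 (e+1) :=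
  ⟨n.1 + Finsupp.single t 1, by
    intro i hi
    rcases Finset.mem_union.mp (Finsupp.support_add hi) with h | h
    · exact n.2.1 i h
    · have := Finsupp.support_single_subset h
      simp only [Finset.mem_singleton] at this
      omega,
   by rw [deg_add, deg_single, n.2.2]⟩

lemma addv_apply {e t : ℕ} (ht : t < 3) (n : Md3 e) (k : ℕ) :
    (addv e t ht n).1 k = n.1 k + if t = k then 1 else 0 := by
  simp [addv, Finsupp.add_apply, Finsupp.single_apply]

lemma addv_inj {e t : ℕ} (ht : t < 3) : Function.Injective (addv e t ht) := by
  intro a b hab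
  have h0 := congrArg (fun m : Md3 (e+1) => m.1 0) hab
  have h1 := congrArg (fun m : Md3 (e+1) => m.1 1) hab
  simp only [addv_apply] at h0 h1
  refine md3_ext ?_ ?_ <;> split_ifs at h0 h1 <;> omega

lemma range_addv {e t : ℕ} (ht : t < 3) (m : Md3 (e+1)) (hm : m.1 t ≠ 0) :
    ∃ n : Md3 e, addv e t ht n = m := by
  set w : Mon := m.1 - Finsupp.single t 1 with hw
  have hk : ∀ k, w k = m.1 k - (if t = k then 1 else 0) := by
    intro k; rw [hw, Finsupp.tsub_apply, Finsupp.single_apply]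
  have hinv : InVars 3 w := by
    intro i hi
    exact m.2.1 i (Finsupp.support_tsub hi)
  have hsum := md3_sum m
  have hdeg : deg w = e := by
    rw [deg_eq_sum hinv, hk 0, hk 1, hk 2]
    interval_cases t <;> simp_all <;> omega
  refine ⟨⟨w, hinv, hdeg⟩, ?_⟩
  apply md3_ext <;>
  · rw [addv_apply]
    show w _ + _ = _
    rw [hk]
    interval_cases t <;> simp_all <;> omega

/-- The monomial `x₂^(e+1)`. -/
noncomputable def X2 (e : ℕ) : Md3 (e+1) :=
  ⟨Finsupp.single 1 (e+1), by
    intro i hi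
    have := Finsupp.support_single_subset hi
    simp only [Finset.mem_singleton] at this
    omega,
   by rw [deg_single]⟩

lemma X2_apply (e k : ℕ) : (X2 e).1 k = if 1 = k then e + 1 else 0 := by
  simp only [X2, Finsupp.single_apply]

lemma X2_0 (e : ℕ) : (X2 e).1 0 = 0 := by rw [X2_apply]; simp

lemma X2_1 (e : ℕ) : (X2 e).1 1 = e + 1 := by rw [X2_apply]; simp

lemma all_pos_of_X2_not_mem {e : ℕ} {U : Set (Md3 (e+1))} (hU : Fc (e+1) U)
    (hX : X2 e ∉ U) : ∀ m ∈ U, m.1 0 ≠ 0 := by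
  intro m hm h0
  apply hX
  apply mem_of_dom hU hm
  · rw [X2_0]; omega
  · rw [X2_0, X2_1]
    have := md3_bound m 1
    omega

lemma top_layer_mem {e : ℕ} {U : Set (Md3 (e+1))} (hU : Fc (e+1) U)
    (hX : X2 e ∈ U) : ∀ m : Md3 (e+1), m.1 2 = 0 → m ∈ U := by
  intro m h2
  apply mem_of_dom hU hX
  · rw [X2_0]; omega
  · rw [X2_0, X2_1]
    have := md3_sum m
    omega

lemma fc_preimage {e t : ℕ} (ht : t < 3) {U : Set (Md3 (e+1))} (hU : Fc (e+1) U) :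
    Fc e (addv e t ht ⁻¹' U) := by
  intro n hn n' hpath
  obtain ⟨h0, h1⟩ := (rtg_iff n n').mp hpath
  refine mem_of_dom hU hn ?_ ?_ <;> simp only [addv_apply] <;> split_ifs <;> omega

lemma fc_image0 {e : ℕ} {U' : Set (Md3 e)} (hU' : Fc e U') :
    Fc (e+1) (addv e 0 (by omega) '' U') := by
  rintro m ⟨n, hn, rfl⟩ m' hpath
  obtain ⟨h0, h1⟩ := (rtg_iff _ m').mp hpath
  simp only [addv_apply] at h0 h1
  norm_num at h0 h1
  have hm'0 : m'.1 0 ≠ 0 := by omega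
  obtain ⟨n', hn'⟩ := range_addv (by omega : (0:ℕ) < 3) m' hm'0
  rw [← hn'] at h0 h1
  simp only [addv_apply] at h0 h1
  norm_num at h0 h1
  exact ⟨n', mem_of_dom hU' hn (by omega) (by omega), hn'⟩

lemma fc_image2 {e : ℕ} {U' : Set (Md3 e)} (hU' : Fc e U') :
    Fc (e+1) ({m : Md3 (e+1) | m.1 2 = 0} ∪ addv e 2 (by omega) '' U') := by
  rintro m hm m' hpath
  obtain ⟨h0, h1⟩ := (rtg_iff _ m').mp hpath
  rcases eq_or_ne (m'.1 2) 0 with h2 | h2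
  · exact Or.inl h2
  · right
    have hm2 : m'.1 0 + m'.1 1 ≤ e := by
      have := md3_sum m'
      omega
    rcases hm with hm | ⟨n, hn, rfl⟩
    · exfalso
      have := md3_sum m
      simp only [Set.mem_setOf_eq] at hm
      omega
    · obtain ⟨n', hn'⟩ := range_addv (by omega : (2:ℕ) < 3) m' h2
      rw [← hn'] at h0 h1
      simp only [addv_apply] at h0 h1
      norm_num at h0 h1
      exact ⟨n', mem_of_dom hU' hn (by omega) (by omega), hn'⟩

lemma addv_mem_range {e t : ℕ} (ht : t < 3) (m : Md3 (e+1)) (hm : m.1 t ≠ 0) :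
    m ∈ Set.range (addv e t ht) := by
  obtain ⟨n, hn⟩ := range_addv ht m hm
  exact ⟨n, hn⟩

/-- Case A equivalence. -/
noncomputable def eqvA (e : ℕ) :
    {U : Set (Md3 (e+1)) // Fc (e+1) U ∧ X2 e ∉ U} ≃ {U' : Set (Md3 e) // Fc e U'} where
  toFun x := ⟨addv e 0 (by omega) ⁻¹' x.1, fc_preimage (by omega) x.2.1⟩
  invFun y := ⟨addv e 0 (by omega) '' y.1, fc_image0 y.2, by
    rintro ⟨n, -, hn⟩
    have h := congrArg (fun m : Md3 (e+1) => m.1 0) hn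
    simp [addv_apply, X2_0] at h⟩
  left_inv x := by
    apply Subtype.ext
    apply Set.image_preimage_eq_of_subset
    intro m hm
    exact addv_mem_range (by omega) m (all_pos_of_X2_not_mem x.2.1 x.2.2 m hm)
  right_inv y := Subtype.ext (Set.preimage_image_eq _ (addv_inj _))

lemma eqvA_ncard (e : ℕ) (x : {U : Set (Md3 (e+1)) // Fc (e+1) U ∧ X2 e ∉ U}) :
    ((eqvA e) x).1.ncard = x.1.ncard := by
  conv_rhs => rw [← (eqvA e).left_inv x]
  exact (Set.ncard_image_of_injective _ (addv_inj _)).symm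

lemma layer_ncard (e : ℕ) : {m : Md3 (e+1) | m.1 2 = 0}.ncard = e + 2 := by
  have hb : ∀ k : Fin (e+2), InVars 3 (Finsupp.single 0 (k:ℕ) + Finsupp.single 1 (e+1-(k:ℕ)))
      ∧ deg (Finsupp.single 0 (k:ℕ) + Finsupp.single 1 (e+1-(k:ℕ))) = e + 1 := by
    intro k
    constructor
    · intro i hi
      rcases Finset.mem_union.mp (Finsupp.support_add hi) with h | h <;>
      · have := Finsupp.support_single_subset h
        simp only [Finset.mem_singleton] at this
        omega
    · rw [deg_add, deg_single, deg_single]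
      have := k.2
      omega
  set g : Fin (e+2) → Md3 (e+1) := fun k =>
    ⟨Finsupp.single 0 (k:ℕ) + Finsupp.single 1 (e+1-(k:ℕ)), (hb k).1, (hb k).2⟩ with hg
  have happ : ∀ (k : Fin (e+2)) (i : ℕ),
      (g k).1 i = (if 0 = i then (k:ℕ) else 0) + (if 1 = i then e+1-(k:ℕ) else 0) := by
    intro k i
    show ((Finsupp.single 0 (k:ℕ) + Finsupp.single 1 (e+1-(k:ℕ)) : Mon)) i = _
    rw [Finsupp.add_apply, Finsupp.single_apply, Finsupp.single_apply]
  have hset : {m : Md3 (e+1) | m.1 2 = 0} = Set.range g := by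
    ext m
    simp only [Set.mem_setOf_eq, Set.mem_range]
    constructor
    · intro h2
      refine ⟨⟨m.1 0, by have := md3_bound m 0; omega⟩, ?_⟩
      have hs := md3_sum m
      apply md3_ext
      · rw [happ]; simp
      · rw [happ]; simp; omega
    · rintro ⟨k, rfl⟩
      rw [happ]; simp
  have hinj : Function.Injective g := by
    intro a b hab
    have := congrArg (fun m : Md3 (e+1) => m.1 0) hab
    simp only [happ] at this
    simp at this
    exact Fin.ext this
  rw [hset, ← Set.image_univ, Set.ncard_image_of_injective _ hinj, Set.ncard_univ,
    Nat.card_eq_fintype_card, Fintype.card_fin]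

/-- Case B equivalence. -/
noncomputable def eqvB (e : ℕ) :
    {U : Set (Md3 (e+1)) // Fc (e+1) U ∧ X2 e ∈ U} ≃ {U' : Set (Md3 e) // Fc e U'} where
  toFun x := ⟨addv e 2 (by omega) ⁻¹' x.1, fc_preimage (by omega) x.2.1⟩
  invFun y := ⟨{m : Md3 (e+1) | m.1 2 = 0} ∪ addv e 2 (by omega) '' y.1, fc_image2 y.2,
    Or.inl (by show (X2 e).1 2 = 0; rw [X2_apply]; simp)⟩
  left_inv x := by
    apply Subtype.ext
    show {m : Md3 (e+1) | m.1 2 = 0} ∪ addv e 2 _ '' (addv e 2 _ ⁻¹' x.1) = x.1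
    apply Set.Subset.antisymm
    · apply Set.union_subset
      · intro m hm
        exact top_layer_mem x.2.1 x.2.2 m hm
      · exact Set.image_preimage_subset _ _
    · intro m hm
      rcases eq_or_ne (m.1 2) 0 with h2 | h2
      · exact Or.inl h2
      · obtain ⟨n, hn⟩ := range_addv (by omega : (2:ℕ) < 3) m h2
        exact Or.inr ⟨n, by rw [Set.mem_preimage, hn]; exact hm, hn⟩
  right_inv y := by
    apply Subtype.ext
    show addv e 2 _ ⁻¹' ({m : Md3 (e+1) | m.1 2 = 0} ∪ addv e 2 _ '' y.1) = y.1
    rw [Set.preimage_union, Set.preimage_image_eq _ (addv_inj _)]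
    have : addv e 2 (by omega) ⁻¹' {m : Md3 (e+1) | m.1 2 = 0} = ∅ := by
      ext n
      simp only [Set.mem_preimage, Set.mem_setOf_eq, Set.mem_empty_iff_false, iff_false]
      rw [addv_apply]
      simp
    rw [this, Set.empty_union]

lemma eqvB_symm_ncard (e : ℕ) (y : {U' : Set (Md3 e) // Fc e U'}) :
    ((eqvB e).symm y).1.ncard = (e + 2) + y.1.ncard := by
  show ({m : Md3 (e+1) | m.1 2 = 0} ∪ addv e 2 _ '' y.1).ncard = (e + 2) + y.1.ncard
  rw [Set.ncard_union_eq ?_ (Set.toFinite _) (Set.toFinite _), layer_ncard,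
    Set.ncard_image_of_injective _ (addv_inj _)]
  rw [Set.disjoint_left]
  rintro m hm ⟨n, -, rfl⟩
  simp only [Set.mem_setOf_eq, addv_apply] at hm
  simp at hm

lemma eqvB_ncard (e : ℕ) (x : {U : Set (Md3 (e+1)) // Fc (e+1) U ∧ X2 e ∈ U}) :
    x.1.ncard = (e + 2) + ((eqvB e) x).1.ncard := by
  conv_lhs => rw [← (eqvB e).left_inv x]
  exact eqvB_symm_ncard e ((eqvB e) x)

lemma card_split {α : Type*} [Finite α] (P Q : Set α → Prop) :
    Nat.card {U : Set α // P U} =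
      Nat.card {U : Set α // P U ∧ Q U} + Nat.card {U : Set α // P U ∧ ¬ Q U} := by
  classical
  rw [← Nat.card_congr (Equiv.sumCompl (fun s : {U : Set α // P U} => Q s.1)), Nat.card_sum]
  congr 1
  · exact Nat.card_congr (Equiv.subtypeSubtypeEquivSubtypeInter P Q)
  · exact Nat.card_congr (Equiv.subtypeSubtypeEquivSubtypeInter P (fun U => ¬ Q U))

lemma Ffilt_rec (e v : ℕ) :
    Ffilt (e+1) v = Ffilt e v + (if (e+1)+1 ≤ v then Ffilt e (v - ((e+1)+1)) else 0) := by
  rw [show Ffilt (e+1) v = Nat.card {U : Set (Md3 (e+1)) // (Fc (e+1) U ∧ U.ncard = v)} from rfl,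
    card_split (fun U => Fc (e+1) U ∧ U.ncard = v) (fun U => X2 e ∉ U)]
  congr 1
  · -- case A
    refine Nat.card_congr ?_
    calc {U : Set (Md3 (e+1)) // (Fc (e+1) U ∧ U.ncard = v) ∧ X2 e ∉ U}
        ≃ {U : Set (Md3 (e+1)) // (Fc (e+1) U ∧ X2 e ∉ U) ∧ U.ncard = v} :=
          Equiv.subtypeEquivRight (fun U => by tauto)
      _ ≃ {s : {U : Set (Md3 (e+1)) // Fc (e+1) U ∧ X2 e ∉ U} // s.1.ncard = v} :=
          (Equiv.subtypeSubtypeEquivSubtypeInter _ _).symm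
      _ ≃ {y : {U' : Set (Md3 e) // Fc e U'} // y.1.ncard = v} :=
          (eqvA e).subtypeEquiv (fun x => by rw [eqvA_ncard])
      _ ≃ {U' : Set (Md3 e) // Fc e U' ∧ U'.ncard = v} :=
          Equiv.subtypeSubtypeEquivSubtypeInter (Fc e) (fun U' => U'.ncard = v)
  · -- case B
    have hcongr : Nat.card {U : Set (Md3 (e+1)) // (Fc (e+1) U ∧ U.ncard = v) ∧ ¬ X2 e ∉ U}
        = Nat.card {y : {U' : Set (Md3 e) // Fc e U'} // (e+2) + y.1.ncard = v} := by
      refine Nat.card_congr ?_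
      calc {U : Set (Md3 (e+1)) // (Fc (e+1) U ∧ U.ncard = v) ∧ ¬ X2 e ∉ U}
          ≃ {U : Set (Md3 (e+1)) // (Fc (e+1) U ∧ X2 e ∈ U) ∧ U.ncard = v} :=
            Equiv.subtypeEquivRight (fun U => by tauto)
        _ ≃ {s : {U : Set (Md3 (e+1)) // Fc (e+1) U ∧ X2 e ∈ U} // s.1.ncard = v} :=
            (Equiv.subtypeSubtypeEquivSubtypeInter _ _).symm
        _ ≃ {y : {U' : Set (Md3 e) // Fc e U'} // (e+2) + y.1.ncard = v} :=
            (eqvB e).subtypeEquiv (fun x => by rw [eqvB_ncard e x])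
    rw [hcongr]
    split_ifs with hv
    · refine Nat.card_congr ?_
      calc {y : {U' : Set (Md3 e) // Fc e U'} // (e+2) + y.1.ncard = v}
          ≃ {y : {U' : Set (Md3 e) // Fc e U'} // y.1.ncard = v - ((e+1)+1)} :=
            Equiv.subtypeEquivRight (fun y => by omega)
        _ ≃ {U' : Set (Md3 e) // Fc e U' ∧ U'.ncard = v - ((e+1)+1)} :=
            Equiv.subtypeSubtypeEquivSubtypeInter (Fc e) (fun U' => U'.ncard = v - ((e+1)+1))
    · have : IsEmpty {y : {U' : Set (Md3 e) // Fc e U'} // (e+2) + y.1.ncard = v} :=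
        ⟨fun y => by have := y.2; omega⟩
      exact Nat.card_of_isEmpty

lemma fTot_rec (e : ℕ) : fTot (e+1) = 2 * fTot e := by
  have hA : Nat.card {U : Set (Md3 (e+1)) // Fc (e+1) U ∧ X2 e ∉ U} = fTot e :=
    Nat.card_congr (eqvA e)
  have hB : Nat.card {U : Set (Md3 (e+1)) // Fc (e+1) U ∧ ¬ X2 e ∉ U} = fTot e := by
    refine Nat.card_congr (.trans (Equiv.subtypeEquivRight (fun U => by tauto)) (eqvB e))
  rw [show fTot (e+1) = Nat.card {U : Set (Md3 (e+1)) // Fc (e+1) U} from rfl,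
    card_split (fun U => Fc (e+1) U) (fun U => X2 e ∉ U), hA, hB]
  ring

/-- The unique monomial of degree 0. -/
noncomputable def mzero : Md3 0 := ⟨0, by intro i hi; simp at hi, by simp [deg]⟩

lemma md3zero_eq (m m' : Md3 0) : m = m' := by
  refine md3_ext ?_ ?_ <;>
  · have := md3_bound m 0
    have := md3_bound m' 0
    have := md3_bound m 1
    have := md3_bound m' 1
    omega

noncomputable instance : Unique (Md3 0) := ⟨⟨mzero⟩, fun m => md3zero_eq m mzero⟩

lemma fc0 (U : Set (Md3 0)) : Fc 0 U := fun m hm m' _ => (md3zero_eq m' m) ▸ hm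

lemma Ffilt0 (v : ℕ) : Ffilt 0 v = if v ≤ 1 then 1 else 0 := by
  have hu : (Set.univ : Set (Md3 0)).ncard = 1 := by
    rw [Set.ncard_univ, Nat.card_unique]
  rcases Nat.lt_or_ge v 2 with hv | hv
  · rw [if_pos (by omega)]
    interval_cases v
    · haveI : Unique {U : Set (Md3 0) // Fc 0 U ∧ U.ncard = 0} := by
        refine ⟨⟨⟨∅, fc0 _, by simp⟩⟩, ?_⟩
        rintro ⟨U, -, hc⟩
        exact Subtype.ext ((Set.ncard_eq_zero (Set.toFinite U)).mp hc)
      exact Nat.card_unique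
    · haveI : Unique {U : Set (Md3 0) // Fc 0 U ∧ U.ncard = 1} := by
        refine ⟨⟨⟨Set.univ, fc0 _, hu⟩⟩, ?_⟩
        rintro ⟨U, -, hc⟩
        obtain ⟨a, ha⟩ := (Set.ncard_eq_one).mp hc
        refine Subtype.ext ?_
        show U = Set.univ
        rw [ha]
        ext x
        simp [md3zero_eq x a]
      exact Nat.card_unique
  · rw [if_neg (by omega)]
    haveI : IsEmpty {U : Set (Md3 0) // Fc 0 U ∧ U.ncard = v} := by
      refine ⟨fun y => ?_⟩
      obtain ⟨U, -, hc⟩ := y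
      have := Set.ncard_le_ncard (Set.subset_univ U) (Set.toFinite _)
      omega
    exact Nat.card_of_isEmpty

lemma fTot0 : fTot 0 = 2 := by
  rw [show fTot 0 = Nat.card {U : Set (Md3 0) // Fc 0 U} from rfl,
    card_split (fun U => Fc 0 U) (fun U => mzero ∈ U)]
  haveI h1 : Unique {U : Set (Md3 0) // Fc 0 U ∧ mzero ∈ U} := by
    refine ⟨⟨⟨Set.univ, fc0 _, Set.mem_univ _⟩⟩, ?_⟩
    rintro ⟨U, -, hm⟩
    refine Subtype.ext ?_
    ext x
    simp [md3zero_eq x mzero, hm]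
  haveI h2 : Unique {U : Set (Md3 0) // Fc 0 U ∧ mzero ∉ U} := by
    refine ⟨⟨⟨∅, fc0 _, by simp⟩⟩, ?_⟩
    rintro ⟨U, -, hm⟩
    refine Subtype.ext ?_
    ext x
    simp only [Set.mem_empty_iff_false, iff_false]
    rw [md3zero_eq x mzero]
    exact hm
  rw [Nat.card_unique, Nat.card_unique]

lemma fTot_pow : ∀ d : ℕ, fTot d = 2 ^ (d + 1) := by
  intro d
  induction d with
  | zero => rw [fTot0]; rfl
  | succ e ih => rw [fTot_rec, ih]; ring


/-- The filter counts of `(M_d^3, A_{3,d})` satisfy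
`F(3,d,v) = F(3,d-1,v) + F(3,d-1, v-(d+1))` for `d ≥ 2` (the second summand
being `0` when `v < d+1`), `F(3,1,v) = 1` for `0 ≤ v ≤ 3` and `0` otherwise,
and the total number of filters is `f(3,d) = 2^(d+1)` for all `d ≥ 1`. -/
theorem stmt17 :
    (∀ d v : ℕ, 2 ≤ d →
      Ffilt d v = Ffilt (d - 1) v +
        (if d + 1 ≤ v then Ffilt (d - 1) (v - (d + 1)) else 0)) ∧
    (∀ v : ℕ, Ffilt 1 v = if v ≤ 3 then 1 else 0) ∧
    (∀ d : ℕ, 1 ≤ d → fTot d = 2 ^ (d + 1)) := by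
  refine ⟨?_, ?_, fun d _ => fTot_pow d⟩
  · intro d v hd
    obtain ⟨e, rfl⟩ : ∃ e, d = e + 1 := ⟨d - 1, by omega⟩
    simpa using Ffilt_rec e v
  · intro v
    have h := Ffilt_rec 0 v
    rw [show (0:ℕ)+1 = 1 from rfl] at h
    rw [h, Ffilt0, Ffilt0]
    split_ifs <;> omega
end

section
/- For all positive integers d and all v, the number of filters of cardinality v of the poset (M_d^3, A_{3,d}) equals the number of partitions of v into distinct parts, each part at most d+1. -/
/-!
Record `m = x₁^a x₂^b x₃^c` by its cell `(c, b)`. An elementary move shifts a unit of exponent to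
a smaller index, so the partial sums `a` and `a + b` can only grow; conversely moves `x₃ → x₂`
followed by moves `x₂ → x₁` realise every such change. Hence `m'` lies below `m` in `A_{3,d}` iff
`c' ≤ c` and `b' + c' ≤ b + c`, and filters become the sets of cells of the triangle `b + c ≤ d`
closed downwards in this order. These are exactly the shifted Young diagrams: the column over
`h` has height `#{p ∈ S | h < p}` for a unique set `S` of positive integers, the diagram has
`∑ p ∈ S, p` cells, and it fits into the triangle iff every part is at most `d + 1`.
-/

section ShiftedDiagram

open Finset

def ShiftedLE (q q' : ℕ × ℕ) : Prop := q.1 ≤ q'.1 ∧ q.1 + q.2 ≤ q'.1 + q'.2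

def IsShiftedDiagram (D : Set (ℕ × ℕ)) : Prop :=
  ∀ q ∈ D, ∀ q', ShiftedLE q' q → q' ∈ D

/-- Cell `(u, h)` lies in row `u` and column `h`. Column `h` has height `#{p ∈ S | h < p}`, so
row `u` has the length of the `(u + 1)`-st largest element of `S`: this is the shifted Young
diagram of the strict partition `S`. -/
def shiftedDiagram (S : Finset ℕ) : Set (ℕ × ℕ) := {q | q.1 < #{p ∈ S | q.2 < p}}

def triangle (d : ℕ) : Set (ℕ × ℕ) := {q | q.1 + q.2 ≤ d}

theorem card_filter_lt_eq (S : Finset ℕ) (h : ℕ) :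
    #{p ∈ S | h < p} = #{p ∈ S | h + 1 < p} + if h + 1 ∈ S then 1 else 0 := by
  have hsplit : {p ∈ S | h < p} = {p ∈ S | h + 1 < p} ∪ {p ∈ S | p = h + 1} := by
    rw [← filter_or]
    exact filter_congr fun p _ => by omega
  rw [hsplit, card_union_of_disjoint
    (disjoint_filter.2 fun p _ (h1 : h + 1 < p) (h2 : p = h + 1) => by omega), filter_eq']
  split_ifs <;> simp

theorem card_filter_lt_le_add (S : Finset ℕ) (h k : ℕ) :
    #{p ∈ S | h < p} ≤ #{p ∈ S | h + k < p} + k := by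
  induction k with
  | zero => simp
  | succ k ih =>
    have := card_filter_lt_eq S (h + k)
    rw [show h + (k + 1) = h + k + 1 by omega]
    split_ifs at this <;> omega

theorem isShiftedDiagram_shiftedDiagram (S : Finset ℕ) : IsShiftedDiagram (shiftedDiagram S) := by
  rintro ⟨u, h⟩ hq ⟨u', h'⟩ ⟨hu, huh⟩
  simp only [shiftedDiagram, Set.mem_ofPred_eq] at hq huh hu ⊢
  rcases le_or_gt h' h with hh | hh
  · calc u' ≤ u := hu
      _ < _ := hq
      _ ≤ _ := card_le_card (monotone_filter_right _ fun p _ (hp : h < p) => by omega)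
  · have := card_filter_lt_le_add S h (h' - h)
    rw [Nat.add_sub_cancel' hh.le] at this
    omega

theorem card_filter_range_lt {m n : ℕ} (h : m ≤ n) : #{x ∈ range n | x < m} = m := by
  rw [show {x ∈ range n | x < m} = range m by ext; simp only [mem_filter, mem_range]; omega,
    card_range]

theorem ncard_shiftedDiagram (S : Finset ℕ) : (shiftedDiagram S).ncard = ∑ p ∈ S, p := by
  set N := S.sup id
  have hD : shiftedDiagram S = ↑{q ∈ range #S ×ˢ range N | q.1 < #{p ∈ S | q.2 < p}} := by
    ext ⟨u, h⟩
    simp only [shiftedDiagram, Set.mem_ofPred_eq, coe_filter, mem_product, mem_range]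
    refine ⟨fun hu => ⟨⟨hu.trans_le (card_filter_le _ _), ?_⟩, hu⟩, fun h => h.2⟩
    obtain ⟨p, hp⟩ := card_pos.1 (Nat.zero_lt_of_lt hu)
    rw [mem_filter] at hp
    exact hp.2.trans_le (le_sup (f := id) hp.1)
  rw [hD, Set.ncard_coe_finset, card_filter, sum_product_right]
  simp_rw [← card_filter, card_filter_range_lt (card_filter_le _ _), card_filter,
    sum_comm (s := range N), ← card_filter]
  exact sum_congr rfl fun p hp => card_filter_range_lt (le_sup (f := id) hp)

theorem eq_of_card_filter_lt_eq {S T : Finset ℕ} (hS : ∀ p ∈ S, 0 < p) (hT : ∀ p ∈ T, 0 < p)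
    (h : ∀ h, #{p ∈ S | h < p} = #{p ∈ T | h < p}) : S = T := by
  ext p
  rcases p with _ | h'
  · exact ⟨fun hp => absurd (hS 0 hp) (lt_irrefl 0), fun hp => absurd (hT 0 hp) (lt_irrefl 0)⟩
  · have hSh := card_filter_lt_eq S h'
    have hTh := card_filter_lt_eq T h'
    rw [h, h (h' + 1)] at hSh
    split_ifs at hSh hTh <;> simp_all

theorem shiftedDiagram_injOn : Set.InjOn shiftedDiagram {S | ∀ p ∈ S, 0 < p} := by
  intro S hS T hT hST
  refine eq_of_card_filter_lt_eq hS hT fun h => eq_of_forall_lt_iff fun u => ?_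
  exact Set.ext_iff.1 hST (u, h)

theorem exists_card_filter_lt_eq (c : ℕ → ℕ) (hmono : ∀ h, c (h + 1) ≤ c h)
    (hstep : ∀ h, c h ≤ c (h + 1) + 1) {N : ℕ} (hN : ∀ h, N ≤ h → c h = 0) :
    ∃ S : Finset ℕ, (∀ p ∈ S, 0 < p) ∧ ∀ h, c h = #{p ∈ S | h < p} := by
  refine ⟨{p ∈ Icc 1 N | c p < c (p - 1)}, fun p hp => (mem_Icc.1 (mem_filter.1 hp).1).1, ?_⟩
  suffices ∀ k h, N ≤ h + k → c h = #{p ∈ {p ∈ Icc 1 N | c p < c (p - 1)} | h < p} from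
    fun h => this N h (Nat.le_add_left N h)
  intro k
  induction k with
  | zero =>
    intro h hh
    rw [hN h hh, eq_comm, card_eq_zero, filter_eq_empty_iff]
    intro p hp
    simp only [mem_filter, mem_Icc] at hp
    omega
  | succ k ih =>
    intro h hh
    rw [card_filter_lt_eq, ← ih (h + 1) (by omega)]
    have := hmono h
    have := hstep h
    split_ifs with hmem <;> simp only [mem_filter, mem_Icc, Nat.add_sub_cancel] at hmem
    · omega
    · by_cases hhN : N ≤ h
      · rw [hN h hhN, hN (h + 1) (by omega)]
      · omega

theorem exists_eq_shiftedDiagram {D : Set (ℕ × ℕ)} (hD : IsShiftedDiagram D) (hfin : D.Finite) :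
    ∃ S : Finset ℕ, (∀ p ∈ S, 0 < p) ∧ shiftedDiagram S = D := by
  have hcol (h : ℕ) : ∃ n, ∀ u, (u, h) ∈ D ↔ u < n := by
    have hlower : IsLowerSet {u | (u, h) ∈ D} :=
      fun u u' hu' hu => hD _ hu _ ⟨hu', by simp only; omega⟩
    rcases hlower.eq_univ_or_Iio with huniv | ⟨n, hn⟩
    · exact absurd ((hfin.preimage (Set.injOn_of_injective (Prod.mk_left_injective h))).subset
        huniv.ge) Set.infinite_univ
    · exact ⟨n, fun u => Set.ext_iff.1 hn u⟩
  choose c hc using hcol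
  obtain ⟨⟨a, b⟩, hab⟩ := hfin.bddAbove
  obtain ⟨S, hS, hcS⟩ := exists_card_filter_lt_eq c
    (fun h => le_of_forall_lt fun u hu =>
      (hc h u).1 (hD _ ((hc (h + 1) u).2 hu) _ ⟨le_rfl, by simp only; omega⟩))
    (fun h => by
      by_contra! hlt
      have := hD _ ((hc h (c (h + 1) + 1)).2 hlt) (c (h + 1), h + 1) ⟨by simp, by simp only; omega⟩
      exact lt_irrefl _ ((hc _ _).1 this))
    (N := b + 1) (fun h hh => by
      by_contra! hpos
      have := (hab ((hc h 0).2 (Nat.pos_of_ne_zero hpos))).2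
      simp only at this
      omega)
  refine ⟨S, hS, Set.ext fun ⟨u, h⟩ => ?_⟩
  simp only [shiftedDiagram, Set.mem_ofPred_eq, ← hcS, hc]

theorem shiftedDiagram_subset_triangle_iff {S : Finset ℕ} {d : ℕ} :
    shiftedDiagram S ⊆ triangle d ↔ ∀ p ∈ S, p ≤ d + 1 := by
  constructor
  · intro hsub p hp
    rcases p with _ | h
    · omega
    · have : (0, h) ∈ shiftedDiagram S := card_pos.2 ⟨h + 1, mem_filter.2 ⟨hp, by omega⟩⟩
      have := hsub this
      simp only [triangle, Set.mem_ofPred_eq] at this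
      omega
  · rintro hS ⟨u, h⟩ hu
    simp only [shiftedDiagram, triangle, Set.mem_ofPred_eq] at hu ⊢
    have : #{p ∈ S | h < p} ≤ #(Ioc h (d + 1)) :=
      card_le_card fun p hp => mem_Ioc.2 ⟨(mem_filter.1 hp).2, hS p (mem_filter.1 hp).1⟩
    rw [Nat.card_Ioc] at this
    omega

theorem finite_triangle (d : ℕ) : (triangle d).Finite :=
  ((Set.finite_Iic d).prod (Set.finite_Iic d)).subset fun q (hq : q.1 + q.2 ≤ d) =>
    ⟨Set.mem_Iic.2 (by omega), Set.mem_Iic.2 (by omega)⟩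

theorem card_shiftedDiagrams (d v : ℕ) :
    Nat.card {D : Set (ℕ × ℕ) // D ⊆ triangle d ∧ IsShiftedDiagram D ∧ D.ncard = v} =
      Nat.card {S : Finset ℕ // (∀ p ∈ S, 1 ≤ p ∧ p ≤ d + 1) ∧ ∑ p ∈ S, p = v} := by
  symm
  refine Nat.card_eq_of_bijective (fun S => ⟨shiftedDiagram S.1,
    shiftedDiagram_subset_triangle_iff.2 fun p hp => (S.2.1 p hp).2,
    isShiftedDiagram_shiftedDiagram S.1, (ncard_shiftedDiagram S.1).trans S.2.2⟩) ⟨?_, ?_⟩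
  · rintro ⟨S, hS, _⟩ ⟨T, hT, _⟩ hST
    exact Subtype.ext (shiftedDiagram_injOn (fun p hp => (hS p hp).1) (fun p hp => (hT p hp).1)
      (congrArg Subtype.val hST))
  · rintro ⟨D, hsub, hD, hv⟩
    obtain ⟨S, hS, rfl⟩ := exists_eq_shiftedDiagram hD ((finite_triangle d).subset hsub)
    have hbound := shiftedDiagram_subset_triangle_iff.1 hsub
    exact ⟨⟨S, fun p hp => ⟨hS p hp, hbound p hp⟩, (ncard_shiftedDiagram S).symm.trans hv⟩, rfl⟩

end ShiftedDiagram

section Monomials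

variable {d : ℕ}

theorem deg_eq_of_inVars_three {m : Mon} (hm : InVars 3 m) : deg m = m 0 + m 1 + m 2 := by
  have hsub : m.support ⊆ Finset.range 3 := fun i hi => Finset.mem_range.2 (hm i hi)
  rw [deg, Finsupp.sum_of_support_subset m hsub (fun _ v => v) (fun _ _ => rfl),
    Finset.sum_range_succ, Finset.sum_range_succ, Finset.sum_range_one]

theorem ElemMove.partialSums_le {x y : Mon} (h : ElemMove x y) :
    y 0 ≤ x 0 ∧ y 0 + y 1 ≤ x 0 + x 1 := by
  obtain ⟨i, j, hij, heq⟩ := h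
  have h0 := DFunLike.congr_fun heq 0
  have h1 := DFunLike.congr_fun heq 1
  simp only [Finsupp.add_apply, Finsupp.single_apply] at h0 h1
  split_ifs at h0 h1 <;> omega

theorem reflTransGen_elemMove_partialSums_le {x y : Mon} (h : Relation.ReflTransGen ElemMove x y) :
    y 0 ≤ x 0 ∧ y 0 + y 1 ≤ x 0 + x 1 := by
  induction h with
  | refl => omega
  | tail _ hmove ih =>
    have := hmove.partialSums_le
    omega

noncomputable def cellMonomial (d u h : ℕ) : Mon :=
  Finsupp.single 0 (d - u - h) + Finsupp.single 1 h + Finsupp.single 2 u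

def cell (m : Md3 d) : ℕ × ℕ := (m.1 2, m.1 1)

theorem cellMonomial_apply (u h i : ℕ) : cellMonomial d u h i =
    if i = 0 then d - u - h else if i = 1 then h else if i = 2 then u else 0 := by
  simp only [cellMonomial, Finsupp.add_apply, Finsupp.single_apply]
  split_ifs <;> omega

theorem cellMonomial_mem {u h : ℕ} (huh : u + h ≤ d) :
    InVars 3 (cellMonomial d u h) ∧ deg (cellMonomial d u h) = d := by
  have hvars : InVars 3 (cellMonomial d u h) := fun i hi => by
    rw [Finsupp.mem_support_iff, cellMonomial_apply] at hi
    split_ifs at hi <;> omega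
  refine ⟨hvars, ?_⟩
  rw [deg_eq_of_inVars_three hvars]
  simp only [cellMonomial_apply, ↓reduceIte, one_ne_zero, OfNat.ofNat_ne_zero, OfNat.ofNat_ne_one]
  omega

theorem eq_cellMonomial (m : Md3 d) : m.1 = cellMonomial d (m.1 2) (m.1 1) := by
  have hdeg := m.2.2
  rw [deg_eq_of_inVars_three m.2.1] at hdeg
  ext i
  rw [cellMonomial_apply]
  split_ifs with h0 h1 h2
  · subst h0
    omega
  · rw [h1]
  · rw [h2]
  · by_contra hne
    have := m.2.1 i (Finsupp.mem_support_iff.2 hne)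
    omega

theorem cell_injective : Function.Injective (cell (d := d)) := by
  intro m m' h
  simp only [cell, Prod.mk.injEq] at h
  rw [Subtype.ext_iff, eq_cellMonomial m, eq_cellMonomial m', h.1, h.2]

theorem range_cell : Set.range (cell (d := d)) = triangle d := by
  ext ⟨u, h⟩
  refine ⟨?_, fun huh => ⟨⟨cellMonomial d u h, cellMonomial_mem huh⟩, ?_⟩⟩
  · rintro ⟨m, hm⟩
    have hdeg := m.2.2
    rw [deg_eq_of_inVars_three m.2.1] at hdeg
    simp only [cell, Prod.mk.injEq] at hm
    show u + h ≤ d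
    omega
  · simp [cell, cellMonomial_apply]

theorem elemMove_cellMonomial_succ_right {u h : ℕ} (huh : u + h + 1 ≤ d) :
    ElemMove (cellMonomial d u h) (cellMonomial d u (h + 1)) := by
  refine ⟨0, 1, zero_lt_one, Finsupp.ext fun i => ?_⟩
  simp only [Finsupp.add_apply, cellMonomial_apply, Finsupp.single_apply]
  split_ifs <;> omega

theorem elemMove_cellMonomial_succ_left {u h : ℕ} (huh : u + h + 1 ≤ d) :
    ElemMove (cellMonomial d u (h + 1)) (cellMonomial d (u + 1) h) := by
  refine ⟨1, 2, one_lt_two, Finsupp.ext fun i => ?_⟩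
  simp only [Finsupp.add_apply, cellMonomial_apply, Finsupp.single_apply]
  split_ifs <;> omega

theorem reflTransGen_cellMonomial_add_right {u h : ℕ} (k : ℕ) (huh : u + h + k ≤ d) :
    Relation.ReflTransGen ElemMove (cellMonomial d u h) (cellMonomial d u (h + k)) := by
  induction k with
  | zero => rfl
  | succ k ih => exact (ih (by omega)).tail (elemMove_cellMonomial_succ_right (by omega))

theorem reflTransGen_cellMonomial_add_left {u h : ℕ} (k : ℕ) (huh : u + h + k ≤ d) :
    Relation.ReflTransGen ElemMove (cellMonomial d u (h + k)) (cellMonomial d (u + k) h) := by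
  induction k generalizing u with
  | zero => rfl
  | succ k ih =>
    rw [← add_assoc, show u + (k + 1) = u + 1 + k by omega]
    exact .head (elemMove_cellMonomial_succ_left (by omega)) (ih (by omega))

theorem reflTransGen_cellMonomial_of_shiftedLE {u h u' h' : ℕ} (hle : ShiftedLE (u', h') (u, h))
    (huh : u + h ≤ d) :
    Relation.ReflTransGen ElemMove (cellMonomial d u' h') (cellMonomial d u h) := by
  obtain ⟨hu, hsum⟩ := hle
  obtain ⟨k, rfl⟩ := Nat.exists_eq_add_of_le hu
  obtain ⟨j, hj⟩ := Nat.exists_eq_add_of_le (show h' ≤ h + k by simp only at hsum; omega)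
  have := reflTransGen_cellMonomial_add_right (d := d) (u := u') (h := h') j (by omega)
  rw [← hj] at this
  exact this.trans (reflTransGen_cellMonomial_add_left k (by omega))

theorem reflTransGen_elemMove_iff (m m' : Md3 d) :
    Relation.ReflTransGen ElemMove m'.1 m.1 ↔ ShiftedLE (cell m') (cell m) := by
  have hm := m.2.2
  have hm' := m'.2.2
  rw [deg_eq_of_inVars_three m.2.1] at hm
  rw [deg_eq_of_inVars_three m'.2.1] at hm'
  refine ⟨fun h => ?_, fun h => ?_⟩
  · have := reflTransGen_elemMove_partialSums_le h
    simp only [ShiftedLE, cell]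
    omega
  · rw [eq_cellMonomial m, eq_cellMonomial m']
    exact reflTransGen_cellMonomial_of_shiftedLE h (by omega)

theorem isFilter_iff_isShiftedDiagram (U : Set (Md3 d)) :
    (∀ m ∈ U, ∀ m' : Md3 d, Relation.ReflTransGen ElemMove m'.1 m.1 → m' ∈ U) ↔
      IsShiftedDiagram (cell '' U) := by
  simp only [reflTransGen_elemMove_iff]
  constructor
  · rintro hU _ ⟨m, hm, rfl⟩ q hq
    obtain ⟨m', rfl⟩ : q ∈ Set.range cell := by
      rw [range_cell]
      have : cell m ∈ triangle d := range_cell (d := d) ▸ Set.mem_range_self m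
      simp only [triangle, Set.mem_ofPred_eq] at this ⊢
      exact hq.2.trans this
    exact ⟨m', hU m hm m' hq, rfl⟩
  · intro hD m hm m' hle
    obtain ⟨m'', hm'', heq⟩ := hD _ ⟨m, hm, rfl⟩ (cell m') hle
    rwa [← cell_injective heq]

theorem Ffilt_eq_card_shiftedDiagrams (d v : ℕ) :
    Ffilt d v =
      Nat.card {D : Set (ℕ × ℕ) // D ⊆ triangle d ∧ IsShiftedDiagram D ∧ D.ncard = v} := by
  refine Nat.card_eq_of_bijective (fun U => ⟨cell '' U.1, ?_, ?_, ?_⟩) ⟨?_, ?_⟩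
  · rw [← range_cell]
    exact Set.image_subset_range _ _
  · exact (isFilter_iff_isShiftedDiagram _).1 U.2.1
  · rw [Set.ncard_image_of_injective _ cell_injective]
    exact U.2.2
  · rintro ⟨U, _⟩ ⟨U', _⟩ h
    exact Subtype.ext (Set.image_injective.2 cell_injective (congrArg Subtype.val h))
  · rintro ⟨D, hsub, hD, hv⟩
    have himage : cell '' (cell ⁻¹' D) = D :=
      Set.image_preimage_eq_of_subset (range_cell (d := d) ▸ hsub)
    refine ⟨⟨cell ⁻¹' D, (isFilter_iff_isShiftedDiagram _).2 (by rwa [himage]), ?_⟩,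
      Subtype.ext himage⟩
    rw [← Set.ncard_image_of_injective _ cell_injective, himage, hv]

end Monomials

theorem stmt18_general (d : ℕ) (v : ℕ) :
    Ffilt d v =
      Nat.card {S : Finset ℕ // (∀ p ∈ S, 1 ≤ p ∧ p ≤ d + 1) ∧ ∑ p ∈ S, p = v} := by
  rw [Ffilt_eq_card_shiftedDiagrams, card_shiftedDiagrams]

/-- For every positive integer `d` and every `v`, the number of
filters of cardinality `v` of `(M_d^3, A_{3,d})` equals the number of partitions
of `v` into distinct parts each at most `d+1` (finite sets of pairwise distinct
positive integers `≤ d+1` summing to `v`). -/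
theorem stmt18 (d : ℕ) (hd : 0 < d) (v : ℕ) :
    Ffilt d v =
      Nat.card {S : Finset ℕ // (∀ p ∈ S, 1 ≤ p ∧ p ≤ d + 1) ∧ ∑ p ∈ S, p = v} :=
  stmt18_general d v
end
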